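/- arXiv:1404.6924 — 4 statements merged into one kernel-verified Lean document; each statement's English description precedes it below -/
import Mathlib

section
/- Under critical loading, a point x ∈ ℝ₊^J with Σ_j min(x_j, K_j) > 0 satisfies the balance equations μ_i R_i(x) = γ_i for all i if and only if x lies in the invariant manifold 𝓘 = { x : μ_i x_i / γ_i = μ_1 (min(x_1, K_1)) / γ_1 for i = 2,…,J }, where node 1 is the unique bottleneck, i.e., μ_1 K_1 / γ_1 < μ_j K_j / γ_j for all j ≠ 1. -/
open Finset

/-- The CPU-sharing rate allocation: `R_i(x) = min(x_i, K_i) / ∑_j min(x_j, K_j)`. -/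
noncomputable def R {J : ℕ} (K : Fin J → ℝ) (x : Fin J → ℝ) (i : Fin J) : ℝ :=
  min (x i) (K i) / ∑ j, min (x j) (K j)

/-- Under critical loading with node `0` the unique bottleneck, a nonnegative point `x`
(with positive total number of busy servers) satisfies the balance equations
`μ_i R_i(x) = γ_i` for all `i` iff it lies in the invariant manifold
`𝓘 = { x : μ_i x_i / γ_i = μ_0 min(x_0, K_0) / γ_0 for i ≠ 0 }`. -/
theorem balance_iff_invariant_manifold {J : ℕ}
    (γ μ K : Fin (J + 1) → ℝ)
    (hγ : ∀ i, 0 < γ i) (hμ : ∀ i, 0 < μ i) (hK : ∀ i, 0 < K i)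
    (hcrit : ∑ i, γ i / μ i = 1)
    (hbot : ∀ j, j ≠ 0 → μ 0 * K 0 / γ 0 < μ j * K j / γ j)
    (x : Fin (J + 1) → ℝ) (hx : ∀ i, 0 ≤ x i)
    (hs : 0 < ∑ j, min (x j) (K j)) :
    (∀ i, μ i * R K x i = γ i) ↔
      (∀ i, i ≠ 0 → μ i * x i / γ i = μ 0 * min (x 0) (K 0) / γ 0) := by
  set S := ∑ j, min (x j) (K j) with hS
  have hSne : S ≠ 0 := ne_of_gt hs
  constructor
  · intro hbal i hi
    have hmin : ∀ j, μ j * min (x j) (K j) = γ j * S := by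
      intro j
      have h := hbal j
      unfold R at h
      rw [← hS] at h
      field_simp at h
      linarith
    have hS0 : S * γ 0 ≤ μ 0 * K 0 := by
      have h0 := hmin 0
      have hle : min (x 0) (K 0) ≤ K 0 := min_le_right _ _
      nlinarith [mul_le_mul_of_nonneg_left hle (hμ 0).le]
    have hxi : x i ≤ K i := by
      by_contra h
      push_neg at h
      have hmi : min (x i) (K i) = K i := min_eq_right h.le
      have hKi : μ i * K i = γ i * S := by rw [← hmi]; exact hmin i
      have hb := hbot i hi
      rw [div_lt_div_iff₀ (hγ 0) (hγ i)] at hb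
      nlinarith [(hγ i), (hγ 0)]
    have hmi : min (x i) (K i) = x i := min_eq_left hxi
    have h1 := hmin i
    have h2 := hmin 0
    rw [hmi] at h1
    rw [div_eq_div_iff (hγ i).ne' (hγ 0).ne']
    linear_combination γ 0 * h1 - γ i * h2
  · intro hinv i
    set c := μ 0 * min (x 0) (K 0) / γ 0 with hc
    have hc0 : 0 ≤ c :=
      div_nonneg (mul_nonneg (hμ 0).le (le_min (hx 0) (hK 0).le)) (hγ 0).le
    have hcle : c ≤ μ 0 * K 0 / γ 0 := by
      rw [hc, div_le_div_iff₀ (hγ 0) (hγ 0)]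
      nlinarith [mul_le_mul_of_nonneg_left (min_le_right (x 0) (K 0)) (mul_pos (hμ 0) (hγ 0)).le]
    have hxeq : ∀ j, min (x j) (K j) = γ j / μ j * c := by
      intro j
      by_cases hj : j = 0
      · subst hj
        rw [hc]
        field_simp [(hγ 0).ne', (hμ 0).ne']
      · have hxj : x j = γ j / μ j * c := by
          have h := hinv j hj
          rw [← h]
          field_simp [(hγ j).ne', (hμ j).ne']
        have hlt : x j < K j := by
          have hb := lt_of_le_of_lt hcle (hbot j hj)
          rw [hc, div_lt_div_iff₀ (hγ 0) (hγ j)] at hb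
          have heq : γ j / μ j * c = γ j * (μ 0 * min (x 0) (K 0)) / (μ j * γ 0) := by
            rw [hc]; ring
          rw [hxj, heq, div_lt_iff₀ (mul_pos (hμ j) (hγ 0))]
          nlinarith [hb, (hμ j), (hγ 0)]
        rw [min_eq_left hlt.le, hxj]
    have hSc : S = c := by
      rw [hS]
      calc (∑ j, min (x j) (K j)) = ∑ j, γ j / μ j * c :=
            Finset.sum_congr rfl fun j _ => hxeq j
        _ = (∑ j, γ j / μ j) * c := by rw [Finset.sum_mul]
        _ = c := by rw [hcrit, one_mul]
    have hcpos : 0 < c := hSc ▸ hs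
    unfold R
    rw [← hS, hxeq i, hSc]
    field_simp [(hμ i).ne', hcpos.ne']
end

section
/- If x ∈ 𝓘 with x ≠ 0, then Ψ(x) = 0, where Ψ(x) = λ - μR(x) + P^T(μR(x)); consequently, the constant function X̄(t) = x solves the fluid ODE. -/
open Matrix Finset

/-- The fluid-model drift `Ψ(x) = λ - μ R(x) + Pᵀ (μ R(x))`. -/
noncomputable def Psi {J : ℕ} (lam μ : Fin J → ℝ) (P : Matrix (Fin J) (Fin J) ℝ)
    (K : Fin J → ℝ) (x : Fin J → ℝ) : Fin J → ℝ :=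
  fun i => lam i - μ i * R K x i + ∑ j, P j i * (μ j * R K x j)

/-- Any nonzero point of the invariant manifold is a zero of the fluid drift `Ψ`;
consequently the constant function equal to `x` solves the fluid ODE. -/
theorem invariant_point_is_stationary {J : ℕ}
    (P : Matrix (Fin (J + 1)) (Fin (J + 1)) ℝ)
    (hP_nonneg : ∀ i j, 0 ≤ P i j) (hP_sub : ∀ i, ∑ j, P i j ≤ 1)
    (hinv : IsUnit (1 - Pᵀ))
    (lam μ K γ : Fin (J + 1) → ℝ) (hlam : ∀ i, 0 ≤ lam i)
    (hγdef : γ = (1 - Pᵀ)⁻¹.mulVec lam)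
    (hγ : ∀ i, 0 < γ i) (hμ : ∀ i, 0 < μ i) (hK : ∀ i, 0 < K i)
    (hcrit : ∑ i, γ i / μ i = 1)
    (hbot : ∀ j, j ≠ 0 → μ 0 * K 0 / γ 0 < μ j * K j / γ j)
    (x : Fin (J + 1) → ℝ) (hx : ∀ i, 0 ≤ x i) (hx0 : x ≠ 0)
    (hmem : ∀ i, i ≠ 0 → μ i * x i / γ i = μ 0 * min (x 0) (K 0) / γ 0) :
    Psi lam μ P K x = 0 ∧
      ∀ t : ℝ, HasDerivAt (fun _ : ℝ => x) (Psi lam μ P K x) t := by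
  classical
  set c := μ 0 * min (x 0) (K 0) / γ 0 with hc
  have hc0 : 0 ≤ c := div_nonneg (mul_nonneg (hμ 0).le (le_min (hx 0) (hK 0).le)) (hγ 0).le
  have hmin : ∀ j, min (x j) (K j) = c * (γ j / μ j) := by
    intro j
    by_cases hj : j = 0
    · subst hj
      rw [hc]
      field_simp [(hγ 0).ne', (hμ 0).ne']
    · have h1 := hmem j hj
      rw [div_eq_iff (hγ j).ne'] at h1
      have hxj : x j = c * (γ j / μ j) := by
        field_simp [(hμ j).ne']
        linear_combination h1
      have hcle : c ≤ μ 0 * K 0 / γ 0 := by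
        rw [hc]
        exact (div_le_div_iff_of_pos_right (hγ 0)).mpr
          (mul_le_mul_of_nonneg_left (min_le_right _ _) (hμ 0).le)
      have hclt : c < μ j * K j / γ j := lt_of_le_of_lt hcle (hbot j hj)
      have hxltK : x j < K j := by
        rw [hxj]
        have h2 : c * (γ j / μ j) < (μ j * K j / γ j) * (γ j / μ j) :=
          mul_lt_mul_of_pos_right hclt (div_pos (hγ j) (hμ j))
        have h3 : (μ j * K j / γ j) * (γ j / μ j) = K j := by
          field_simp [(hμ j).ne', (hγ j).ne']
        linarith [h2, h3.symm.le]
      rw [min_eq_left hxltK.le, hxj]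
  have hcpos : 0 < c := by
    rcases hc0.lt_or_eq with h | h
    · exact h
    · exfalso
      apply hx0
      funext j
      show x j = 0
      have hm := hmin j
      rw [← h, zero_mul] at hm
      by_cases hj : j = 0
      · subst hj
        rcases (hx 0).lt_or_eq with h' | h'
        · have : 0 < min (x 0) (K 0) := lt_min h' (hK 0)
          linarith [hm ▸ this]
        · exact h'.symm
      · have h1 := hmem j hj
        rw [← h, div_eq_iff (hγ j).ne'] at h1
        have h2 : μ j * x j = 0 := by linarith [h1]
        rcases mul_eq_zero.mp h2 with h' | h'
        · exact absurd h' (hμ j).ne'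
        · exact h'
  have hsum : ∑ j, min (x j) (K j) = c := by
    calc ∑ j, min (x j) (K j) = ∑ j, c * (γ j / μ j) :=
          Finset.sum_congr rfl fun j _ => hmin j
      _ = c * ∑ j, γ j / μ j := by rw [Finset.mul_sum]
      _ = c := by rw [hcrit, mul_one]
  have hμR : ∀ i, μ i * R K x i = γ i := by
    intro i
    unfold R
    rw [hsum, hmin i]
    field_simp [(hμ i).ne', hcpos.ne']
  have hγeq : (1 - Pᵀ).mulVec γ = lam := by
    rw [hγdef, Matrix.mulVec_mulVec,
      Matrix.mul_nonsing_inv _ ((Matrix.isUnit_iff_isUnit_det _).mp hinv),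
      Matrix.one_mulVec]
  have hlameq : ∀ i, lam i = γ i - ∑ j, P j i * γ j := by
    intro i
    have h := congrFun hγeq i
    rw [Matrix.sub_mulVec, Matrix.one_mulVec] at h
    have h2 : Pᵀ.mulVec γ i = ∑ j, P j i * γ j := by
      simp [Matrix.mulVec, dotProduct, Matrix.transpose_apply]
    simp only [Pi.sub_apply] at h
    rw [h2] at h
    linarith [h]
  have hPsi : Psi lam μ P K x = 0 := by
    funext i
    simp only [Psi, Pi.zero_apply]
    simp_rw [hμR]
    rw [hlameq i]
    ring
  refine ⟨hPsi, fun t => ?_⟩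
  rw [hPsi]
  exact hasDerivAt_const t x
end

section
/- For every w ≥ 0, the point x†(w) defined by x†_i(w) = (μ_1K_1/γ_1)(γ_i/μ_i)(w/w*) for all i when w ≤ w*, and by x†_1(w) = K_1 + (w - w*)/τ_1, x†_i(w) = (μ_1K_1/γ_1)(γ_i/μ_i) for i ≥ 2 when w > w*, is the unique point in the intersection of the invariant manifold 𝓘 with the workload hyperplane { x : β^T(I-P^T)^{-1} x = w }. -/
/-!
A point of `𝓘` is determined by its bottleneck coordinate `s = x 0`: it is
`(min s K₀ / K₀) • x* + (s - min s K₀) • e₀`, whose workload is the piecewise linear function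
`(min s K₀ / K₀) * w* + (s - min s K₀) * τ₁`. Both slopes are positive because `(I - Pᵀ)⁻¹` is
invertible and entrywise nonnegative, so the workload is strictly increasing along `𝓘` and takes
each value `w ≥ 0` exactly once, at `x†(w)`.
-/

open Matrix Finset

noncomputable section

variable {J : ℕ}

/-- `x*`: the invariant point whose bottleneck coordinate is `K_0`. -/
def xstar (γ μ K : Fin (J + 1) → ℝ) : Fin (J + 1) → ℝ :=
  fun i => (γ i / μ i) * (μ 0 / γ 0) * K 0

/-- The critical workload level `w* = βᵀ (I - Pᵀ)⁻¹ x*`. -/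
def wstar (P : Matrix (Fin (J + 1)) (Fin (J + 1)) ℝ) (γ μ K : Fin (J + 1) → ℝ) : ℝ :=
  (fun i => (μ i)⁻¹) ⬝ᵥ (1 - Pᵀ)⁻¹.mulVec (xstar γ μ K)

/-- `τ_1 = βᵀ (I - Pᵀ)⁻¹ e_1`, the mean remaining total service of a bottleneck job. -/
def tau1 (P : Matrix (Fin (J + 1)) (Fin (J + 1)) ℝ) (μ : Fin (J + 1) → ℝ) : ℝ :=
  (fun i => (μ i)⁻¹) ⬝ᵥ (1 - Pᵀ)⁻¹.mulVec (Pi.single 0 1)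

/-- The invariant point `x†(w)` at workload level `w`. -/
def xdag (P : Matrix (Fin (J + 1)) (Fin (J + 1)) ℝ) (γ μ K : Fin (J + 1) → ℝ)
    (w : ℝ) : Fin (J + 1) → ℝ :=
  if w ≤ wstar P γ μ K then
    fun i => (μ 0 * K 0 / γ 0) * (γ i / μ i) * (w / wstar P γ μ K)
  else
    fun i => if i = 0 then K 0 + (w - wstar P γ μ K) / tau1 P μ
             else (μ 0 * K 0 / γ 0) * (γ i / μ i)

lemma dotProduct_pos_of_pos_of_nonneg {n : Type*} [Fintype n] {β u : n → ℝ}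
    (hβ : ∀ i, 0 < β i) (hu : 0 ≤ u) (hu0 : u ≠ 0) : 0 < β ⬝ᵥ u := by
  obtain ⟨i, hi⟩ := Function.ne_iff.mp hu0
  exact Finset.sum_pos' (fun j _ => mul_nonneg (hβ j).le (hu j))
    ⟨i, Finset.mem_univ i, mul_pos (hβ i) ((hu i).lt_of_ne' hi)⟩

lemma dotProduct_mulVec_pos_of_isUnit {n : Type*} [Fintype n] [DecidableEq n]
    {A : Matrix n n ℝ} (hA : IsUnit A) (hA0 : ∀ i j, 0 ≤ A i j) {β v : n → ℝ}
    (hβ : ∀ i, 0 < β i) (hv : 0 ≤ v) (hv0 : v ≠ 0) : 0 < β ⬝ᵥ A *ᵥ v := by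
  refine dotProduct_pos_of_pos_of_nonneg hβ (fun i => ?_) ?_
  · exact dotProduct_nonneg_of_nonneg (fun j => hA0 i j) hv
  · rw [← A.mulVec_zero]
    exact (mulVec_injective_iff_isUnit.mpr hA).ne hv0

lemma strictMono_min_div_mul_add {k a b : ℝ} (hk : 0 < k) (ha : 0 < a) (hb : 0 < b) :
    StrictMono fun s => min s k / k * a + (s - min s k) * b := by
  intro s t hst
  have hexcess : s - min s k ≤ t - min t k := by
    rcases le_total s k with hs | hs <;> rcases le_total t k with ht | ht <;>
      simp only [min_eq_left, min_eq_right, *] <;> linarith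
  rcases (min_le_min_right k hst.le).lt_or_eq with hmin | hmin
  · have : (s - min s k) * b ≤ (t - min t k) * b := by gcongr
    have : min s k / k * a < min t k / k * a := by gcongr
    linarith
  · have : (s - min s k) * b < (t - min t k) * b := mul_lt_mul_of_pos_right (by linarith) hb
    simp only [hmin] at this ⊢
    linarith

section

variable (P : Matrix (Fin (J + 1)) (Fin (J + 1)) ℝ) {γ μ K : Fin (J + 1) → ℝ}

lemma xstar_pos (hγ : ∀ i, 0 < γ i) (hμ : ∀ i, 0 < μ i) (hK : 0 < K 0) (i : Fin (J + 1)) :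
    0 < xstar γ μ K i := by
  have := hγ i; have := hμ i; have := hγ 0; have := hμ 0
  unfold xstar; positivity

lemma xstar_zero (hγ : γ 0 ≠ 0) (hμ : μ 0 ≠ 0) : xstar γ μ K 0 = K 0 := by
  simp only [xstar]; field_simp

lemma wstar_pos (hinv : IsUnit (1 - Pᵀ)) (hA : ∀ i j, 0 ≤ (1 - Pᵀ)⁻¹ i j)
    (hγ : ∀ i, 0 < γ i) (hμ : ∀ i, 0 < μ i) (hK : 0 < K 0) : 0 < wstar P γ μ K :=
  dotProduct_mulVec_pos_of_isUnit (isUnit_nonsing_inv_iff.mpr hinv) hA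
    (fun i => inv_pos.mpr (hμ i)) (fun i => (xstar_pos hγ hμ hK i).le)
    (Function.ne_iff.mpr ⟨0, (xstar_pos hγ hμ hK 0).ne'⟩)

lemma tau1_pos (hinv : IsUnit (1 - Pᵀ)) (hA : ∀ i j, 0 ≤ (1 - Pᵀ)⁻¹ i j)
    (hμ : ∀ i, 0 < μ i) : 0 < tau1 P μ :=
  dotProduct_mulVec_pos_of_isUnit (isUnit_nonsing_inv_iff.mpr hinv) hA
    (fun i => inv_pos.mpr (hμ i)) (Pi.single_nonneg.mpr zero_le_one) (by simp)

end

def invariantCurve (γ μ K : Fin (J + 1) → ℝ) (s : ℝ) : Fin (J + 1) → ℝ :=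
  (min s (K 0) / K 0) • xstar γ μ K + (s - min s (K 0)) • Pi.single 0 1

section

variable {γ μ K : Fin (J + 1) → ℝ}

lemma invariantCurve_apply_zero (hγ : γ 0 ≠ 0) (hμ : μ 0 ≠ 0) (hK : K 0 ≠ 0) (s : ℝ) :
    invariantCurve γ μ K s 0 = s := by
  simp only [invariantCurve, Pi.add_apply, Pi.smul_apply, smul_eq_mul, xstar_zero hγ hμ,
    Pi.single_eq_same]
  field_simp
  ring

lemma invariantCurve_apply_of_ne (s : ℝ) {i : Fin (J + 1)} (hi : i ≠ 0) :
    invariantCurve γ μ K s i = min s (K 0) / K 0 * xstar γ μ K i := by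
  simp [invariantCurve, hi]

lemma invariantCurve_nonneg (hγ : ∀ i, 0 < γ i) (hμ : ∀ i, 0 < μ i) (hK : 0 < K 0)
    {s : ℝ} (hs : 0 ≤ s) : 0 ≤ invariantCurve γ μ K s := by
  have hmin : 0 ≤ min s (K 0) / K 0 := div_nonneg (le_min hs hK.le) hK.le
  have hexcess : 0 ≤ s - min s (K 0) := sub_nonneg.mpr (min_le_left s (K 0))
  have he : (0 : Fin (J + 1) → ℝ) ≤ Pi.single 0 1 := Pi.single_nonneg.mpr zero_le_one
  exact add_nonneg (smul_nonneg hmin fun i => (xstar_pos hγ hμ hK i).le) (smul_nonneg hexcess he)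

lemma invariantCurve_manifold_eq (hγ : ∀ i, 0 < γ i) (hμ : ∀ i, 0 < μ i) (hK : K 0 ≠ 0) (s : ℝ)
    {i : Fin (J + 1)} (hi : i ≠ 0) :
    μ i * invariantCurve γ μ K s i / γ i
      = μ 0 * min (invariantCurve γ μ K s 0) (K 0) / γ 0 := by
  have := (hγ i).ne'; have := (hμ i).ne'; have := (hγ 0).ne'
  rw [invariantCurve_apply_zero (hγ 0).ne' (hμ 0).ne' hK, invariantCurve_apply_of_ne s hi, xstar]
  field_simp

lemma eq_invariantCurve_of_manifold_eq (hγ : ∀ i, 0 < γ i) (hμ : ∀ i, 0 < μ i) (hK : K 0 ≠ 0)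
    {y : Fin (J + 1) → ℝ}
    (hy : ∀ i, i ≠ 0 → μ i * y i / γ i = μ 0 * min (y 0) (K 0) / γ 0) :
    y = invariantCurve γ μ K (y 0) := by
  funext i
  rcases eq_or_ne i 0 with rfl | hi
  · exact (invariantCurve_apply_zero (hγ 0).ne' (hμ 0).ne' hK _).symm
  · have h := hy i hi
    have := (hγ i).ne'; have := (hμ i).ne'; have := (hγ 0).ne'
    rw [invariantCurve_apply_of_ne _ hi, xstar]
    field_simp at h ⊢
    linear_combination h

lemma workload_invariantCurve (P : Matrix (Fin (J + 1)) (Fin (J + 1)) ℝ) (s : ℝ) :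
    (fun i => (μ i)⁻¹) ⬝ᵥ (1 - Pᵀ)⁻¹ *ᵥ invariantCurve γ μ K s
      = min s (K 0) / K 0 * wstar P γ μ K + (s - min s (K 0)) * tau1 P μ := by
  simp only [invariantCurve, mulVec_add, mulVec_smul, dotProduct_add, dotProduct_smul,
    smul_eq_mul, wstar, tau1]

end

def bottleneckLevel (P : Matrix (Fin (J + 1)) (Fin (J + 1)) ℝ) (γ μ K : Fin (J + 1) → ℝ)
    (w : ℝ) : ℝ :=
  if w ≤ wstar P γ μ K then K 0 * (w / wstar P γ μ K)
  else K 0 + (w - wstar P γ μ K) / tau1 P μ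

section

variable {P : Matrix (Fin (J + 1)) (Fin (J + 1)) ℝ} {γ μ K : Fin (J + 1) → ℝ} {w : ℝ}

lemma bottleneckLevel_nonneg (hW : 0 < wstar P γ μ K) (hT : 0 < tau1 P μ) (hK : 0 < K 0)
    (hw : 0 ≤ w) : 0 ≤ bottleneckLevel P γ μ K w := by
  unfold bottleneckLevel
  split_ifs with hle
  · positivity
  · have : 0 ≤ (w - wstar P γ μ K) / tau1 P μ := div_nonneg (by linarith) hT.le
    linarith

lemma min_bottleneckLevel (hW : 0 < wstar P γ μ K) (hT : 0 < tau1 P μ) (hK : 0 < K 0) :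
    min (bottleneckLevel P γ μ K w) (K 0)
      = if w ≤ wstar P γ μ K then K 0 * (w / wstar P γ μ K) else K 0 := by
  unfold bottleneckLevel
  split_ifs with hle
  · exact min_eq_left (mul_le_of_le_one_right hK.le ((div_le_one hW).mpr hle))
  · exact min_eq_right (le_add_of_nonneg_right (div_nonneg (by linarith) hT.le))

lemma xdag_eq_invariantCurve (hγ : ∀ i, 0 < γ i) (hμ : ∀ i, 0 < μ i) (hK : 0 < K 0)
    (hW : 0 < wstar P γ μ K) (hT : 0 < tau1 P μ) :
    xdag P γ μ K w = invariantCurve γ μ K (bottleneckLevel P γ μ K w) := by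
  funext i
  rcases eq_or_ne i 0 with rfl | hi
  · rw [invariantCurve_apply_zero (hγ 0).ne' (hμ 0).ne' hK.ne', xdag, bottleneckLevel]
    split_ifs
    · have := (hγ 0).ne'; have := (hμ 0).ne'
      field_simp
    · simp
  · rw [invariantCurve_apply_of_ne _ hi, min_bottleneckLevel hW hT hK, xdag, xstar]
    have := hK.ne'
    split_ifs
    · field_simp
    · simp only [hi, ite_false]
      field_simp

lemma workload_bottleneckLevel (hW : 0 < wstar P γ μ K) (hT : 0 < tau1 P μ) (hK : 0 < K 0) :
    min (bottleneckLevel P γ μ K w) (K 0) / K 0 * wstar P γ μ K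
      + (bottleneckLevel P γ μ K w - min (bottleneckLevel P γ μ K w) (K 0)) * tau1 P μ = w := by
  rw [min_bottleneckLevel hW hT hK, bottleneckLevel]
  have := hK.ne'; have := hW.ne'; have := hT.ne'
  split_ifs <;> field_simp <;> ring

end

theorem xdag_unique_invariant_point_on_hyperplane_general
    (P : Matrix (Fin (J + 1)) (Fin (J + 1)) ℝ)
    (hinv : IsUnit (1 - Pᵀ)) (hA_nonneg : ∀ i j, 0 ≤ (1 - Pᵀ)⁻¹ i j)
    (γ μ K : Fin (J + 1) → ℝ)
    (hγ : ∀ i, 0 < γ i) (hμ : ∀ i, 0 < μ i) (hK : ∀ i, 0 < K i)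
    (w : ℝ) (hw : 0 ≤ w) :
    ((∀ i, 0 ≤ xdag P γ μ K w i) ∧
      (∀ i, i ≠ 0 → μ i * xdag P γ μ K w i / γ i
          = μ 0 * min (xdag P γ μ K w 0) (K 0) / γ 0) ∧
      (fun i => (μ i)⁻¹) ⬝ᵥ (1 - Pᵀ)⁻¹.mulVec (xdag P γ μ K w) = w) ∧
    ∀ y : Fin (J + 1) → ℝ, (∀ i, 0 ≤ y i) →
      (∀ i, i ≠ 0 → μ i * y i / γ i = μ 0 * min (y 0) (K 0) / γ 0) →
      (fun i => (μ i)⁻¹) ⬝ᵥ (1 - Pᵀ)⁻¹.mulVec y = w →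
      y = xdag P γ μ K w := by
  have hK0 := hK 0
  have hW := wstar_pos P hinv hA_nonneg hγ hμ hK0
  have hT := tau1_pos P hinv hA_nonneg hμ
  have hxdag : xdag P γ μ K w = invariantCurve γ μ K (bottleneckLevel P γ μ K w) :=
    xdag_eq_invariantCurve hγ hμ hK0 hW hT
  refine ⟨⟨fun i => ?_, fun i hi => ?_, ?_⟩, fun y _ hy hyw => ?_⟩
  · rw [hxdag]
    exact invariantCurve_nonneg hγ hμ hK0 (bottleneckLevel_nonneg hW hT hK0 hw) i
  · rw [hxdag]
    exact invariantCurve_manifold_eq hγ hμ hK0.ne' _ hi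
  · rw [hxdag, workload_invariantCurve, workload_bottleneckLevel hW hT hK0]
  · have hy_curve := eq_invariantCurve_of_manifold_eq hγ hμ hK0.ne' hy
    rw [hy_curve, workload_invariantCurve, ← workload_bottleneckLevel hW hT hK0 (w := w)] at hyw
    rw [hy_curve, (strictMono_min_div_mul_add hK0 hW hT).injective hyw, hxdag]

/-- For every `w ≥ 0`, `x†(w)` is the unique point in the intersection of the invariant
manifold with the workload hyperplane `{ x : βᵀ (I - Pᵀ)⁻¹ x = w }`. -/
theorem xdag_unique_invariant_point_on_hyperplane
    (P : Matrix (Fin (J + 1)) (Fin (J + 1)) ℝ)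
    (hP_nonneg : ∀ i j, 0 ≤ P i j) (hP_sub : ∀ i, ∑ j, P i j ≤ 1)
    (hinv : IsUnit (1 - Pᵀ)) (hA_nonneg : ∀ i j, 0 ≤ (1 - Pᵀ)⁻¹ i j)
    (γ μ K : Fin (J + 1) → ℝ)
    (hγ : ∀ i, 0 < γ i) (hμ : ∀ i, 0 < μ i) (hK : ∀ i, 0 < K i)
    (hcrit : ∑ i, γ i / μ i = 1)
    (hbot : ∀ j, j ≠ 0 → μ 0 * K 0 / γ 0 < μ j * K j / γ j)
    (w : ℝ) (hw : 0 ≤ w) :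
    ((∀ i, 0 ≤ xdag P γ μ K w i) ∧
      (∀ i, i ≠ 0 → μ i * xdag P γ μ K w i / γ i
          = μ 0 * min (xdag P γ μ K w 0) (K 0) / γ 0) ∧
      (fun i => (μ i)⁻¹) ⬝ᵥ (1 - Pᵀ)⁻¹.mulVec (xdag P γ μ K w) = w) ∧
    ∀ y : Fin (J + 1) → ℝ, (∀ i, 0 ≤ y i) →
      (∀ i, i ≠ 0 → μ i * y i / γ i = μ 0 * min (y 0) (K 0) / γ 0) →
      (fun i => (μ i)⁻¹) ⬝ᵥ (1 - Pᵀ)⁻¹.mulVec y = w →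
      y = xdag P γ μ K w :=
  xdag_unique_invariant_point_on_hyperplane_general P hinv hA_nonneg γ μ K hγ hμ hK w hw

end
end

section
/- In the two-node case (J = 2) with node 1 the bottleneck, for any point x on the hyperplane τ_1x_1 + τ_2x_2 = w with x ≠ x†(w) and x_1 < x†_1(w), one has R_1(x) ≤ R_1(x†(w)) and R_2(x) ≥ R_2(x†(w)), with at least one inequality strict; consequently (x - x†(w))^T(γ - μR(x)) < 0. -/
/-!
At the invariant point the non-bottleneck node 2 works below capacity: `μ₂ x†₂ / γ₂` equals
`μ₁ min(x†₁, K₁) / γ₁ ≤ μ₁ K₁ / γ₁ < μ₂ K₂ / γ₂`, so `x†₂ < K₂`. Moving along the hyperplane with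
`x₁ < x†₁` forces `x₂ > x†₂`, so node 1's capped queue does not grow while node 2's strictly grows;
hence node 1's share strictly drops and node 2's strictly rises. With `γᵢ = μᵢ Rᵢ(x†)` both terms of
`(x - x†)ᵀ(γ - μ R(x))` are then negative.
-/

lemma lt_of_mul_div_eq_min_div {μ₁ μ₂ γ₁ γ₂ K₁ K₂ x y : ℝ}
    (hμ₁ : 0 ≤ μ₁) (hγ₁ : 0 ≤ γ₁) (hμ₂ : 0 < μ₂) (hγ₂ : 0 < γ₂)
    (hbot : μ₁ * K₁ / γ₁ < μ₂ * K₂ / γ₂) (hinv : μ₂ * y / γ₂ = μ₁ * min x K₁ / γ₁) :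
    y < K₂ := by
  have h : μ₂ * y / γ₂ < μ₂ * K₂ / γ₂ :=
    calc μ₂ * y / γ₂ = μ₁ * min x K₁ / γ₁ := hinv
      _ ≤ μ₁ * K₁ / γ₁ := by gcongr; exact min_le_right x K₁
      _ < μ₂ * K₂ / γ₂ := hbot
  exact lt_of_mul_lt_mul_left ((div_lt_div_iff_of_pos_right hγ₂).1 h) hμ₂.le

lemma lt_of_mul_add_mul_eq {τ₁ τ₂ x₁ x₂ y₁ y₂ : ℝ} (hτ₁ : 0 < τ₁) (hτ₂ : 0 < τ₂)
    (h : τ₁ * x₁ + τ₂ * x₂ = τ₁ * y₁ + τ₂ * y₂) (hx : x₁ < y₁) : y₂ < x₂ := by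
  have : 0 < τ₂ * (x₂ - y₂) := by nlinarith
  exact sub_pos.1 (pos_of_mul_pos_right this hτ₂.le)

lemma div_add_lt_div_add {a b a' b' : ℝ} (ha : 0 ≤ a) (ha' : 0 < a') (hb' : 0 ≤ b')
    (hle : a ≤ a') (hlt : b' < b) :
    a / (a + b) < a' / (a' + b') ∧ b' / (a' + b') < b / (a + b) := by
  have hs : 0 < a + b := by linarith
  have hs' : 0 < a' + b' := by linarith
  have hshare : a / (a + b) < a' / (a' + b') := by
    rw [div_lt_div_iff₀ hs hs']
    nlinarith [mul_le_mul_of_nonneg_right hle hb', mul_lt_mul_of_pos_left hlt ha']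
  have hcompl : ∀ {p q : ℝ}, 0 < p + q → q / (p + q) = 1 - p / (p + q) := fun h => by
    rw [one_sub_div h.ne', add_sub_cancel_left]
  exact ⟨hshare, by rw [hcompl hs, hcompl hs']; linarith⟩

theorem two_node_lyapunov_decrease_general
    (τ1 τ2 μ1 μ2 γ1 γ2 K1 K2 w : ℝ)
    (hτ1 : 0 < τ1) (hτ2 : 0 < τ2)
    (hμ1 : 0 < μ1) (hμ2 : 0 < μ2) (hγ1 : 0 < γ1) (hγ2 : 0 < γ2)
    (hK1 : 0 < K1) (hK2 : 0 < K2)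
    (hbot : μ1 * K1 / γ1 < μ2 * K2 / γ2)
    (x1 x2 xd1 xd2 : ℝ)
    (hx1 : 0 ≤ x1) (hxd2 : 0 ≤ xd2)
    (hplane : τ1 * x1 + τ2 * x2 = w) (hplaned : τ1 * xd1 + τ2 * xd2 = w)
    (hinv : μ2 * xd2 / γ2 = μ1 * min xd1 K1 / γ1)
    (hbal1 : μ1 * (min xd1 K1 / (min xd1 K1 + min xd2 K2)) = γ1)
    (hbal2 : μ2 * (min xd2 K2 / (min xd1 K1 + min xd2 K2)) = γ2)
    (hlt : x1 < xd1) :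
    min x1 K1 / (min x1 K1 + min x2 K2)
        ≤ min xd1 K1 / (min xd1 K1 + min xd2 K2) ∧
    min x2 K2 / (min x1 K1 + min x2 K2)
        ≥ min xd2 K2 / (min xd1 K1 + min xd2 K2) ∧
    (min x1 K1 / (min x1 K1 + min x2 K2)
        < min xd1 K1 / (min xd1 K1 + min xd2 K2) ∨
     min x2 K2 / (min x1 K1 + min x2 K2)
        > min xd2 K2 / (min xd1 K1 + min xd2 K2)) ∧
    (x1 - xd1) * (γ1 - μ1 * (min x1 K1 / (min x1 K1 + min x2 K2)))
      + (x2 - xd2) * (γ2 - μ2 * (min x2 K2 / (min x1 K1 + min x2 K2))) < 0 := by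
  have hxd2K : xd2 < K2 := lt_of_mul_div_eq_min_div hμ1.le hγ1.le hμ2 hγ2 hbot hinv
  have hx2 : xd2 < x2 := lt_of_mul_add_mul_eq hτ1 hτ2 (hplane.trans hplaned.symm) hlt
  have hcap2 : min xd2 K2 < min x2 K2 := by
    rw [min_eq_left hxd2K.le]
    exact lt_min hx2 hxd2K
  obtain ⟨hR1, hR2⟩ := div_add_lt_div_add (le_min hx1 hK1.le) (lt_min (hx1.trans_lt hlt) hK1)
    (le_min hxd2 hK2.le) (min_le_min_right K1 hlt.le) hcap2
  refine ⟨hR1.le, hR2.le, Or.inl hR1, add_neg (mul_neg_of_neg_of_pos (sub_neg.2 hlt) ?_)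
    (mul_neg_of_pos_of_neg (sub_pos.2 hx2) ?_)⟩
  · rw [← hbal1, sub_pos]
    exact mul_lt_mul_of_pos_left hR1 hμ1
  · rw [← hbal2, sub_neg]
    exact mul_lt_mul_of_pos_left hR2 hμ2

/-- Two-node case: monotonicity of the allocation off the invariant point.
`R_i(x) = min(x_i, K_i) / (min(x_1, K_1) + min(x_2, K_2))`; `x†(w)` is the invariant
point on the hyperplane `τ_1 x_1 + τ_2 x_2 = w`, satisfying `μ_i R_i(x†) = γ_i`.
If `x ≠ x†(w)` lies on the same hyperplane with `x_1 < x†_1(w)`, then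
`R_1(x) ≤ R_1(x†)`, `R_2(x) ≥ R_2(x†)`, at least one strictly, and
`(x - x†)ᵀ(γ - μ R(x)) < 0`. -/
theorem two_node_lyapunov_decrease
    (τ1 τ2 μ1 μ2 γ1 γ2 K1 K2 w : ℝ)
    (hτ1 : 0 < τ1) (hτ2 : 0 < τ2)
    (hμ1 : 0 < μ1) (hμ2 : 0 < μ2) (hγ1 : 0 < γ1) (hγ2 : 0 < γ2)
    (hK1 : 0 < K1) (hK2 : 0 < K2)
    (hcrit : γ1 / μ1 + γ2 / μ2 = 1)
    (hbot : μ1 * K1 / γ1 < μ2 * K2 / γ2)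
    (x1 x2 xd1 xd2 : ℝ)
    (hx1 : 0 ≤ x1) (hx2 : 0 ≤ x2) (hxd1 : 0 ≤ xd1) (hxd2 : 0 ≤ xd2)
    (hxs : 0 < min x1 K1 + min x2 K2) (hxds : 0 < min xd1 K1 + min xd2 K2)
    (hplane : τ1 * x1 + τ2 * x2 = w) (hplaned : τ1 * xd1 + τ2 * xd2 = w)
    (hinv : μ2 * xd2 / γ2 = μ1 * min xd1 K1 / γ1)
    (hbal1 : μ1 * (min xd1 K1 / (min xd1 K1 + min xd2 K2)) = γ1)
    (hbal2 : μ2 * (min xd2 K2 / (min xd1 K1 + min xd2 K2)) = γ2)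
    (hne : (x1, x2) ≠ (xd1, xd2))
    (hlt : x1 < xd1) :
    min x1 K1 / (min x1 K1 + min x2 K2)
        ≤ min xd1 K1 / (min xd1 K1 + min xd2 K2) ∧
    min x2 K2 / (min x1 K1 + min x2 K2)
        ≥ min xd2 K2 / (min xd1 K1 + min xd2 K2) ∧
    (min x1 K1 / (min x1 K1 + min x2 K2)
        < min xd1 K1 / (min xd1 K1 + min xd2 K2) ∨
     min x2 K2 / (min x1 K1 + min x2 K2)
        > min xd2 K2 / (min xd1 K1 + min xd2 K2)) ∧
    (x1 - xd1) * (γ1 - μ1 * (min x1 K1 / (min x1 K1 + min x2 K2)))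
      + (x2 - xd2) * (γ2 - μ2 * (min x2 K2 / (min x1 K1 + min x2 K2))) < 0 :=
  two_node_lyapunov_decrease_general τ1 τ2 μ1 μ2 γ1 γ2 K1 K2 w hτ1 hτ2 hμ1 hμ2 hγ1 hγ2 hK1 hK2 hbot
    x1 x2 xd1 xd2 hx1 hxd2 hplane hplaned hinv hbal1 hbal2 hlt
end
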